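/- Let G = ⟨v, h ∣ v² = 1, (vh)² = 1⟩ be the infinite dihedral group and let φ : G → ℤ/2ℤ be the homomorphism with φ(v) = 1 and φ(h) = 1. Then the kernel of φ is the subgroup generated by hv and h², and this kernel is isomorphic to G itself. -/

import Mathlib

/-!
Every element of the infinite dihedral group is `h ^ n` or `h ^ n * v`, and these normal forms
are distinct, as their images in `DihedralGroup 0` (the isometries of `ℤ`) show. So `φ` reads off
the parity of `n` plus the number of `v`'s, and the endomorphism `v ↦ h * v`, `h ↦ h ^ 2`, which
sends `h ^ n ↦ h ^ (2 * n)` and `h ^ n * v ↦ h ^ (2 * n + 1) * v`, is injective with image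
exactly `ker φ`.
-/

/-- Relators for the infinite dihedral group ⟨v, h ∣ v², (vh)²⟩, with
`true ↦ v` and `false ↦ h`. -/
def dihedralRels : Set (FreeGroup Bool) :=
  {FreeGroup.of true ^ 2, (FreeGroup.of true * FreeGroup.of false) ^ 2}

section DihedralRelations

variable {M : Type*} [Group M] {a b : M}

theorem mul_zpow_eq_zpow_neg_mul (ha : a * a = 1) (hab : a * b * (a * b) = 1) (n : ℤ) :
    a * b ^ n = b ^ (-n) * a := by
  have hconj : a * b * a⁻¹ = b⁻¹ := by
    rw [inv_eq_of_mul_eq_one_right ha]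
    exact eq_inv_of_mul_eq_one_left (by simpa only [mul_assoc] using hab)
  calc a * b ^ n = (a * b ^ n * a⁻¹) * a := by group
    _ = b ^ (-n) * a := by rw [← conj_zpow, hconj, inv_zpow']

theorem zpow_mul_mul_zpow (ha : a * a = 1) (hab : a * b * (a * b) = 1) (m n : ℤ) :
    b ^ m * a * b ^ n = b ^ (m - n) * a := by
  rw [mul_assoc, mul_zpow_eq_zpow_neg_mul ha hab, ← mul_assoc, ← zpow_add, sub_eq_add_neg]

theorem zpow_mul_mul_self (ha : a * a = 1) (hab : a * b * (a * b) = 1) (n : ℤ) :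
    b ^ n * a * (b ^ n * a) = 1 := by
  rw [← mul_assoc, zpow_mul_mul_zpow ha hab, sub_self, zpow_zero, one_mul, ha]

theorem exists_eq_zpow_or_zpow_mul_of_mem_closure (ha : a * a = 1)
    (hab : a * b * (a * b) = 1) {g : M} (hg : g ∈ Subgroup.closure {a, b}) :
    ∃ n : ℤ, g = b ^ n ∨ g = b ^ n * a := by
  have mul_a : ∀ y : M, (∃ n : ℤ, y = b ^ n ∨ y = b ^ n * a) →
      ∃ n : ℤ, a * y = b ^ n ∨ a * y = b ^ n * a := by
    rintro _ ⟨n, rfl | rfl⟩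
    · exact ⟨-n, .inr (mul_zpow_eq_zpow_neg_mul ha hab n)⟩
    · exact ⟨-n, .inl (by rw [← mul_assoc, mul_zpow_eq_zpow_neg_mul ha hab, mul_assoc, ha,
        mul_one])⟩
  have mul_zpow : ∀ (k : ℤ) (y : M), (∃ n : ℤ, y = b ^ n ∨ y = b ^ n * a) →
      ∃ n : ℤ, b ^ k * y = b ^ n ∨ b ^ k * y = b ^ n * a := by
    rintro k _ ⟨n, rfl | rfl⟩
    · exact ⟨k + n, .inl (zpow_add b k n).symm⟩
    · exact ⟨k + n, .inr (by rw [← mul_assoc, ← zpow_add])⟩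
  induction hg using Subgroup.closure_induction_left with
  | one => exact ⟨0, .inl (zpow_zero b).symm⟩
  | mul_left x hx y _ ih =>
    rcases hx with rfl | rfl
    · exact mul_a y ih
    · simpa using mul_zpow 1 y ih
  | inv_mul_cancel x hx y _ ih =>
    rcases hx with rfl | rfl
    · rw [inv_eq_of_mul_eq_one_right ha]
      exact mul_a y ih
    · simpa using mul_zpow (-1) y ih

end DihedralRelations

namespace InfDihedral

abbrev G := PresentedGroup dihedralRels

def v : G := PresentedGroup.of true
def h : G := PresentedGroup.of false

theorem closure_v_h : Subgroup.closure {v, h} = ⊤ := by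
  rw [← PresentedGroup.closure_range_of]
  congr 1
  ext
  simp [v, h, or_comm]

theorem v_mul_v : v * v = 1 := by
  simpa [sq, v, PresentedGroup.of] using
    PresentedGroup.one_of_mem (rels := dihedralRels) (Or.inl rfl)

theorem v_mul_h_mul_v_mul_h : v * h * (v * h) = 1 := by
  simpa [sq, v, h, PresentedGroup.of] using
    PresentedGroup.one_of_mem (rels := dihedralRels) (Or.inr rfl)

theorem exists_eq_zpow_or_zpow_mul (g : G) : ∃ n : ℤ, g = h ^ n ∨ g = h ^ n * v :=
  exists_eq_zpow_or_zpow_mul_of_mem_closure v_mul_v v_mul_h_mul_v_mul_h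
    (closure_v_h ▸ Subgroup.mem_top g)

section Lift

variable {M : Type*} [Group M] (a b : M) (ha : a * a = 1) (hab : a * b * (a * b) = 1)

def lift : G →* M :=
  PresentedGroup.toGroup (f := fun x => if x then a else b) <| by
    rintro r (rfl | rfl)
    · simpa [sq] using ha
    · simpa [sq] using hab

theorem lift_v : lift a b ha hab v = a := PresentedGroup.toGroup.of _
theorem lift_h : lift a b ha hab h = b := PresentedGroup.toGroup.of _

end Lift

def toDihedralGroup : G →* DihedralGroup 0 :=
  lift (.sr 0) (.r 1) (DihedralGroup.sr_mul_self 0) (by simp)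

-- `ZMod 0` is `ℤ` only up to unfolding, so exponents are cast into it explicitly.
theorem toDihedralGroup_h_zpow (n : ℤ) : toDihedralGroup (h ^ n) = .r (Int.cast n) := by
  rw [map_zpow, toDihedralGroup, lift_h, DihedralGroup.r_one_zpow]

theorem toDihedralGroup_h_zpow_mul_v (n : ℤ) :
    toDihedralGroup (h ^ n * v) = .sr (-Int.cast n) := by
  rw [map_mul, toDihedralGroup_h_zpow, toDihedralGroup, lift_v, DihedralGroup.r_mul_sr, zero_sub]

theorem eq_zero_of_h_zpow_eq_one {n : ℤ} (hn : h ^ n = 1) : n = 0 := by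
  have := congrArg toDihedralGroup hn
  rw [toDihedralGroup_h_zpow, map_one, DihedralGroup.one_def, DihedralGroup.r.injEq,
    ZMod.intCast_zmod_eq_zero_iff_dvd] at this
  simpa using this

theorem h_zpow_mul_v_ne_one (n : ℤ) : h ^ n * v ≠ 1 := by
  intro hn
  have := congrArg toDihedralGroup hn
  rw [toDihedralGroup_h_zpow_mul_v, map_one, DihedralGroup.one_def] at this
  cases this

theorem h_mul_v_mul_h_mul_v : h * v * (h * v) = 1 := by
  simpa using zpow_mul_mul_self v_mul_v v_mul_h_mul_v_mul_h 1

theorem h_mul_v_mul_h_sq_mul_self : h * v * h ^ 2 * (h * v * h ^ 2) = 1 := by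
  have : h * v * h ^ 2 = h ^ (-1 : ℤ) * v := by
    simpa using zpow_mul_mul_zpow v_mul_v v_mul_h_mul_v_mul_h 1 2
  rw [this]
  exact zpow_mul_mul_self v_mul_v v_mul_h_mul_v_mul_h (-1)

def doubling : G →* G := lift (h * v) (h ^ 2) h_mul_v_mul_h_mul_v h_mul_v_mul_h_sq_mul_self

theorem doubling_h_zpow (n : ℤ) : doubling (h ^ n) = h ^ (2 * n) := by
  rw [map_zpow, doubling, lift_h, zpow_mul, zpow_ofNat]

theorem doubling_h_zpow_mul_v (n : ℤ) : doubling (h ^ n * v) = h ^ (2 * n + 1) * v := by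
  rw [map_mul, doubling_h_zpow, doubling, lift_v, zpow_add_one, mul_assoc]

theorem doubling_injective : Function.Injective doubling := by
  rw [injective_iff_map_eq_one]
  intro g hg
  obtain ⟨n, rfl | rfl⟩ := exists_eq_zpow_or_zpow_mul g
  · rw [doubling_h_zpow] at hg
    rw [show n = 0 by simpa using eq_zero_of_h_zpow_eq_one hg, zpow_zero]
  · rw [doubling_h_zpow_mul_v] at hg
    exact absurd hg (h_zpow_mul_v_ne_one _)

theorem range_doubling : doubling.range = Subgroup.closure {h * v, h ^ 2} := by
  rw [MonoidHom.range_eq_map, ← closure_v_h, MonoidHom.map_closure, Set.image_pair, doubling,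
    lift_v, lift_h]

section Parity

variable {φ : G →* Multiplicative (ZMod 2)}

theorem range_doubling_le_ker (hv : φ v = .ofAdd 1) (hh : φ h = .ofAdd 1) :
    doubling.range ≤ φ.ker := by
  rw [MonoidHom.range_le_ker_iff]
  refine PresentedGroup.ext fun x => ?_
  cases x
  · show φ (doubling h) = 1
    rw [doubling, lift_h, map_pow, hh]
    rfl
  · show φ (doubling v) = 1
    rw [doubling, lift_v, map_mul, hv, hh]
    rfl

theorem map_h_zpow (hh : φ h = .ofAdd 1) (n : ℤ) : φ (h ^ n) = .ofAdd (n : ZMod 2) := by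
  rw [map_zpow, hh, ← ofAdd_zsmul, zsmul_one]

theorem ker_le_range_doubling (hv : φ v = .ofAdd 1) (hh : φ h = .ofAdd 1) :
    φ.ker ≤ doubling.range := by
  intro g hg
  rw [MonoidHom.mem_ker] at hg
  obtain ⟨n, rfl | rfl⟩ := exists_eq_zpow_or_zpow_mul g
  · rw [map_h_zpow hh, ofAdd_eq_one, ZMod.intCast_eq_zero_iff_even] at hg
    obtain ⟨k, rfl⟩ := hg
    exact ⟨h ^ k, by rw [doubling_h_zpow, two_mul]⟩
  · rw [map_mul, map_h_zpow hh, hv, ← ofAdd_add, ofAdd_eq_one, add_eq_zero_iff_eq_neg,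
      ZMod.neg_eq_self_mod_two, ZMod.intCast_eq_one_iff_odd] at hg
    obtain ⟨k, rfl⟩ := hg
    exact ⟨h ^ k * v, doubling_h_zpow_mul_v k⟩

end Parity

end InfDihedral

open InfDihedral

/-- If φ : ⟨v, h ∣ v², (vh)²⟩ → ℤ/2 satisfies φ(v) = 1, φ(h) = 1, then
ker φ = ⟨hv, h²⟩ and ker φ is isomorphic to the group itself. -/
theorem stmt5 (φ : PresentedGroup dihedralRels →* Multiplicative (ZMod 2))
    (hv : φ (PresentedGroup.of true) = Multiplicative.ofAdd 1)
    (hh : φ (PresentedGroup.of false) = Multiplicative.ofAdd 1) :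
    φ.ker = Subgroup.closure
        {PresentedGroup.of false * PresentedGroup.of true, PresentedGroup.of false ^ 2} ∧
      Nonempty (φ.ker ≃* PresentedGroup dihedralRels) := by
  have hker : φ.ker = doubling.range :=
    le_antisymm (ker_le_range_doubling hv hh) (range_doubling_le_ker hv hh)
  exact ⟨hker.trans range_doubling,
    ⟨(MulEquiv.subgroupCongr hker).trans (MonoidHom.ofInjective doubling_injective).symm⟩⟩
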